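/- arXiv:2403.03083 — 5 statements merged into one kernel-verified Lean document; each statement's English description precedes it below -/
import Mathlib

section
/- If an interaction i cannot be pruned w.r.t. a set of lifelines L' (i.e., i ↛_{L'} holds), then every trace t in the denotational semantics ρ(i) contains at least one action occurring on some lifeline in L'. -/
/-- Conflict predicate: trace `t` contains an action occurring on lifeline `l`. -/
def conflict {A L : Type} (theta : A → L) : List A → L → Prop
  | [], _ => False
  | a :: t, l => theta a = l ∨ conflict theta t l

/-- Conditional conflict predicate: trace `t` contains an action on lifeline `l` with `l ∉ r`. -/
def condConflict {A L : Type} (theta : A → L) (r : Set L) : List A → L → Prop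
  | [], _ => False
  | a :: t, l => (theta a = l ∧ l ∉ r) ∨ condConflict theta r t l

/-- Conditional sequencing: `CondSeq theta r t1 t2 t` means `t ∈ t1 ⫽_r t2`. -/
inductive CondSeq {A L : Type} (theta : A → L) (r : Set L) :
    List A → List A → List A → Prop
  | nil_left (t2 : List A) : CondSeq theta r [] t2 t2
  | nil_right (t1 : List A) : CondSeq theta r t1 [] t1
  | left {a1 a2 : A} {t1 t2 t : List A} :
      CondSeq theta r t1 (a2 :: t2) t →
      CondSeq theta r (a1 :: t1) (a2 :: t2) (a1 :: t)
  | right {a1 a2 : A} {t1 t2 t : List A} :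
      CondSeq theta r (a1 :: t1) t2 t →
      ¬ condConflict theta r (a1 :: t1) (theta a2) →
      CondSeq theta r (a1 :: t1) (a2 :: t2) (a2 :: t)

/-- Interaction terms. -/
inductive Interaction (A L : Type) where
  | empty : Interaction A L
  | act : A → Interaction A L
  | alt : Interaction A L → Interaction A L → Interaction A L
  | strict : Interaction A L → Interaction A L → Interaction A L
  | coreg : Set L → Interaction A L → Interaction A L → Interaction A L
  | loopS : Interaction A L → Interaction A L
  | loopC : Set L → Interaction A L → Interaction A L

/-- Concatenation (strict sequencing) of sets of traces. -/
def concatSet {A : Type} (S1 S2 : Set (List A)) : Set (List A) :=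
  {t | ∃ u ∈ S1, ∃ v ∈ S2, t = u ++ v}

/-- Conditional sequencing of sets of traces. -/
def condSeqSet {A L : Type} (theta : A → L) (r : Set L) (S1 S2 : Set (List A)) :
    Set (List A) :=
  {t | ∃ u ∈ S1, ∃ v ∈ S2, CondSeq theta r u v t}

/-- `j`-th power of a trace set under a binary scheduling operator. -/
def powOp {A : Type} (op : Set (List A) → Set (List A) → Set (List A))
    (S : Set (List A)) : ℕ → Set (List A)
  | 0 => {([] : List A)}
  | n + 1 => op S (powOp op S n)

/-- Kleene closure of a trace set under a binary scheduling operator. -/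
def kleene {A : Type} (op : Set (List A) → Set (List A) → Set (List A))
    (S : Set (List A)) : Set (List A) :=
  ⋃ n : ℕ, powOp op S n

/-- Denotational semantics of interactions (sets of global traces). -/
def rho {A L : Type} (theta : A → L) : Interaction A L → Set (List A)
  | .empty => {([] : List A)}
  | .act a => {[a]}
  | .alt i1 i2 => rho theta i1 ∪ rho theta i2
  | .strict i1 i2 => concatSet (rho theta i1) (rho theta i2)
  | .coreg r i1 i2 => condSeqSet theta r (rho theta i1) (rho theta i2)
  | .loopS i1 => kleene concatSet (rho theta i1)
  | .loopC r i1 => kleene (condSeqSet theta r) (rho theta i1)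

/-- `CannotPrune theta L' i` : all behaviors of `i` involve an action on a lifeline of `L'`. -/
inductive CannotPrune {A L : Type} (theta : A → L) (L' : Set L) : Interaction A L → Prop
  | act {a : A} : theta a ∈ L' → CannotPrune theta L' (.act a)
  | alt {i1 i2 : Interaction A L} :
      CannotPrune theta L' i1 → CannotPrune theta L' i2 → CannotPrune theta L' (.alt i1 i2)
  | strict_left {i1 i2 : Interaction A L} :
      CannotPrune theta L' i1 → CannotPrune theta L' (.strict i1 i2)
  | strict_right {i1 i2 : Interaction A L} :
      CannotPrune theta L' i2 → CannotPrune theta L' (.strict i1 i2)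
  | coreg_left {r : Set L} {i1 i2 : Interaction A L} :
      CannotPrune theta L' i1 → CannotPrune theta L' (.coreg r i1 i2)
  | coreg_right {r : Set L} {i1 i2 : Interaction A L} :
      CannotPrune theta L' i2 → CannotPrune theta L' (.coreg r i1 i2)

/-- Pruning relation: `Prunes theta L' i i'` means `i ↝_{L'} i'`. -/
inductive Prunes {A L : Type} (theta : A → L) (L' : Set L) :
    Interaction A L → Interaction A L → Prop
  | empty : Prunes theta L' .empty .empty
  | act {a : A} : theta a ∉ L' → Prunes theta L' (.act a) (.act a)
  | alt_both {i1 i2 i1' i2' : Interaction A L} :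
      Prunes theta L' i1 i1' → Prunes theta L' i2 i2' →
      Prunes theta L' (.alt i1 i2) (.alt i1' i2')
  | alt_left {i1 i2 i1' : Interaction A L} :
      Prunes theta L' i1 i1' → CannotPrune theta L' i2 →
      Prunes theta L' (.alt i1 i2) i1'
  | alt_right {i1 i2 i2' : Interaction A L} :
      Prunes theta L' i2 i2' → CannotPrune theta L' i1 →
      Prunes theta L' (.alt i1 i2) i2'
  | strict {i1 i2 i1' i2' : Interaction A L} :
      Prunes theta L' i1 i1' → Prunes theta L' i2 i2' →
      Prunes theta L' (.strict i1 i2) (.strict i1' i2')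
  | coreg {r : Set L} {i1 i2 i1' i2' : Interaction A L} :
      Prunes theta L' i1 i1' → Prunes theta L' i2 i2' →
      Prunes theta L' (.coreg r i1 i2) (.coreg r i1' i2')
  | loopS {i1 i1' : Interaction A L} :
      Prunes theta L' i1 i1' → Prunes theta L' (.loopS i1) (.loopS i1')
  | loopS_elim {i1 : Interaction A L} :
      CannotPrune theta L' i1 → Prunes theta L' (.loopS i1) .empty
  | loopC {r : Set L} {i1 i1' : Interaction A L} :
      Prunes theta L' i1 i1' → Prunes theta L' (.loopC r i1) (.loopC r i1')
  | loopC_elim {r : Set L} {i1 : Interaction A L} :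
      CannotPrune theta L' i1 → Prunes theta L' (.loopC r i1) .empty

/-!
Whether a trace conflicts with a lifeline depends only on the set of its actions. Every trace of
`strict(i1, i2)` or `coreg_r(i1, i2)` is a permutation of a trace of `i1` followed by one of `i2`,
so it contains all actions of both, and the property propagates up the `CannotPrune` derivation.
-/

theorem conflict_iff_exists_mem {A L : Type} (theta : A → L) (t : List A) (l : L) :
    conflict theta t l ↔ ∃ a ∈ t, theta a = l := by
  induction t with
  | nil => simp [conflict]
  | cons a t ih => simp [conflict, ih]

theorem conflict_of_subset {A L : Type} {theta : A → L} {u t : List A} {l : L}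
    (hut : u ⊆ t) (hu : conflict theta u l) : conflict theta t l := by
  rw [conflict_iff_exists_mem] at hu ⊢
  obtain ⟨a, ha, rfl⟩ := hu
  exact ⟨a, hut ha, rfl⟩

theorem exists_conflict_of_subset {A L : Type} {theta : A → L} {L' : Set L} {u t : List A}
    (hut : u ⊆ t) (hu : ∃ l ∈ L', conflict theta u l) : ∃ l ∈ L', conflict theta t l :=
  let ⟨l, hl, hc⟩ := hu
  ⟨l, hl, conflict_of_subset hut hc⟩

theorem CondSeq.perm {A L : Type} {theta : A → L} {r : Set L} {u v t : List A}
    (h : CondSeq theta r u v t) : t.Perm (u ++ v) := by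
  induction h with
  | nil_left t2 => rfl
  | nil_right t1 => simp
  | left _ ih => exact ih.cons _
  | right _ _ ih => exact (ih.cons _).trans List.perm_middle.symm

theorem CondSeq.subset_left {A L : Type} {theta : A → L} {r : Set L} {u v t : List A}
    (h : CondSeq theta r u v t) : u ⊆ t :=
  List.Subset.trans (List.subset_append_left u v) h.perm.symm.subset

theorem CondSeq.subset_right {A L : Type} {theta : A → L} {r : Set L} {u v t : List A}
    (h : CondSeq theta r u v t) : v ⊆ t :=
  List.Subset.trans (List.subset_append_right u v) h.perm.symm.subset

/-- An interaction that cannot be pruned w.r.t. `L'` has, on every accepted trace,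
an action occurring on some lifeline of `L'`. -/
theorem cannotPrune_all_traces_conflict {A L : Type} (theta : A → L)
    (L' : Set L) (i : Interaction A L) (h : CannotPrune theta L' i) :
    ∀ t ∈ rho theta i, ∃ l ∈ L', conflict theta t l := by
  induction h with
  | @act a ha =>
    rintro _ rfl
    exact ⟨theta a, ha, Or.inl rfl⟩
  | alt _ _ ih₁ ih₂ =>
    rintro t (ht | ht)
    exacts [ih₁ t ht, ih₂ t ht]
  | strict_left _ ih =>
    rintro _ ⟨u, hu, v, -, rfl⟩
    exact exists_conflict_of_subset (List.subset_append_left u v) (ih u hu)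
  | strict_right _ ih =>
    rintro _ ⟨u, -, v, hv, rfl⟩
    exact exists_conflict_of_subset (List.subset_append_right u v) (ih v hv)
  | coreg_left _ ih =>
    rintro _ ⟨u, hu, v, -, hseq⟩
    exact exists_conflict_of_subset hseq.subset_left (ih u hu)
  | coreg_right _ ih =>
    rintro _ ⟨u, -, v, hv, hseq⟩
    exact exists_conflict_of_subset hseq.subset_right (ih v hv)
end

section
/- If i ↝_L i' where L is the full set of lifelines (i.e., interaction i can be pruned on all lifelines), then the empty trace ε belongs to ρ(i). -/
theorem nil_mem_kleene {A : Type} (op : Set (List A) → Set (List A) → Set (List A))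
    (S : Set (List A)) : ([] : List A) ∈ kleene op S :=
  Set.mem_iUnion.mpr ⟨0, rfl⟩

theorem nil_mem_concatSet {A : Type} {S1 S2 : Set (List A)} (h1 : [] ∈ S1) (h2 : [] ∈ S2) :
    ([] : List A) ∈ concatSet S1 S2 :=
  ⟨[], h1, [], h2, rfl⟩

theorem nil_mem_condSeqSet {A L : Type} (theta : A → L) (r : Set L) {S1 S2 : Set (List A)}
    (h1 : [] ∈ S1) (h2 : [] ∈ S2) : ([] : List A) ∈ condSeqSet theta r S1 S2 :=
  ⟨[], h1, [], h2, CondSeq.nil_left []⟩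

-- `act` is the only pruning rule whose source cannot accept `[]`, and with `L' = univ` it never applies.
/-- An interaction which can be pruned on all lifelines accepts the empty trace. -/
theorem prune_all_accepts_nil {A L : Type} (theta : A → L)
    (i i' : Interaction A L) (h : Prunes theta (Set.univ : Set L) i i') :
    ([] : List A) ∈ rho theta i := by
  induction h with
  | empty => rfl
  | act ha => exact absurd (Set.mem_univ _) ha
  | alt_both _ _ ih1 _ => exact Or.inl ih1
  | alt_left _ _ ih1 => exact Or.inl ih1
  | alt_right _ _ ih2 => exact Or.inr ih2
  | strict _ _ ih1 ih2 => exact nil_mem_concatSet ih1 ih2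
  | coreg _ _ ih1 ih2 => exact nil_mem_condSeqSet theta _ ih1 ih2
  | loopS _ _ | loopS_elim _ => exact nil_mem_kleene _ _
  | loopC _ _ | loopC_elim _ => exact nil_mem_kleene _ _
end

section
/- If the empty trace ε belongs to ρ(i), then there exists an interaction i' such that i ↝_L i', i.e., i can be pruned on the full set of lifelines L. -/
/-!
Every interaction either prunes on `L'` or satisfies `CannotPrune theta L'`: by structural
recursion, an action goes to one side according to its lifeline, and a loop whose body cannot
be pruned is itself pruned to `∅`. A `CannotPrune` interaction has an action in each of its
traces, so it does not accept `ε`.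
-/

section

variable {A L : Type} {theta : A → L}

lemma CondSeq.eq_nil_of_nil {r : Set L} {u v : List A} (h : CondSeq theta r u v []) :
    u = [] ∧ v = [] := by
  cases h <;> simp_all

lemma CannotPrune.nil_notMem_rho {L' : Set L} {i : Interaction A L}
    (h : CannotPrune theta L' i) : ([] : List A) ∉ rho theta i := by
  induction h with
  | act _ => simp [rho]
  | alt _ _ ih1 ih2 => rintro (hx | hx) <;> [exact ih1 hx; exact ih2 hx]
  | strict_left _ ih =>
      rintro ⟨u, hu, v, -, huv⟩
      exact ih ((List.append_eq_nil_iff.mp huv.symm).1 ▸ hu)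
  | strict_right _ ih =>
      rintro ⟨u, -, v, hv, huv⟩
      exact ih ((List.append_eq_nil_iff.mp huv.symm).2 ▸ hv)
  | coreg_left _ ih =>
      rintro ⟨u, hu, v, -, huv⟩
      exact ih (huv.eq_nil_of_nil.1 ▸ hu)
  | coreg_right _ ih =>
      rintro ⟨u, -, v, hv, huv⟩
      exact ih (huv.eq_nil_of_nil.2 ▸ hv)

lemma exists_prunes_or_cannotPrune (theta : A → L) (L' : Set L) (i : Interaction A L) :
    (∃ i', Prunes theta L' i i') ∨ CannotPrune theta L' i := by
  induction i with
  | empty => exact .inl ⟨_, .empty⟩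
  | act a =>
      by_cases ha : theta a ∈ L'
      · exact .inr (.act ha)
      · exact .inl ⟨_, .act ha⟩
  | alt i1 i2 ih1 ih2 =>
      rcases ih1, ih2 with ⟨⟨i1', h1⟩ | h1, ⟨i2', h2⟩ | h2⟩
      · exact .inl ⟨_, .alt_both h1 h2⟩
      · exact .inl ⟨_, .alt_left h1 h2⟩
      · exact .inl ⟨_, .alt_right h2 h1⟩
      · exact .inr (.alt h1 h2)
  | strict i1 i2 ih1 ih2 =>
      rcases ih1, ih2 with ⟨⟨i1', h1⟩ | h1, ⟨i2', h2⟩ | h2⟩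
      · exact .inl ⟨_, .strict h1 h2⟩
      · exact .inr (.strict_right h2)
      all_goals exact .inr (.strict_left h1)
  | coreg r i1 i2 ih1 ih2 =>
      rcases ih1, ih2 with ⟨⟨i1', h1⟩ | h1, ⟨i2', h2⟩ | h2⟩
      · exact .inl ⟨_, .coreg h1 h2⟩
      · exact .inr (.coreg_right h2)
      all_goals exact .inr (.coreg_left h1)
  | loopS i1 ih =>
      rcases ih with ⟨i1', h1⟩ | h1
      · exact .inl ⟨_, .loopS h1⟩
      · exact .inl ⟨_, .loopS_elim h1⟩
  | loopC r i1 ih =>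
      rcases ih with ⟨i1', h1⟩ | h1
      · exact .inl ⟨_, .loopC h1⟩
      · exact .inl ⟨_, .loopC_elim h1⟩

end

/-- An interaction which accepts the empty trace can be pruned on all lifelines. -/
theorem accepts_nil_prune_all {A L : Type} (theta : A → L)
    (i : Interaction A L) (h : ([] : List A) ∈ rho theta i) :
    ∃ i' : Interaction A L, Prunes theta (Set.univ : Set L) i i' :=
  (exists_prunes_or_cannotPrune theta Set.univ i).resolve_right fun hc => hc.nil_notMem_rho h
end

section
/- Soundness of the execution relation (one direction): for any interactions i, i', action a and trace t, if i —a→ i' and t ∈ ρ(i'), then a.t ∈ ρ(i). -/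
/-- Execution relation: `Exec theta i a i'` means `i —a→ i'`. -/
inductive Exec {A L : Type} (theta : A → L) :
    Interaction A L → A → Interaction A L → Prop
  | act (a : A) : Exec theta (.act a) a .empty
  | alt_left {i1 i2 i1' : Interaction A L} {a : A} :
      Exec theta i1 a i1' → Exec theta (.alt i1 i2) a i1'
  | alt_right {i1 i2 i2' : Interaction A L} {a : A} :
      Exec theta i2 a i2' → Exec theta (.alt i1 i2) a i2'
  | strict_left {i1 i2 i1' : Interaction A L} {a : A} :
      Exec theta i1 a i1' → Exec theta (.strict i1 i2) a (.strict i1' i2)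
  | strict_right {i1 i2 i2' : Interaction A L} {a : A} :
      Prunes theta Set.univ i1 .empty → Exec theta i2 a i2' →
      Exec theta (.strict i1 i2) a i2'
  | coreg_left {r : Set L} {i1 i2 i1' : Interaction A L} {a : A} :
      Exec theta i1 a i1' → Exec theta (.coreg r i1 i2) a (.coreg r i1' i2)
  | coreg_right {r : Set L} {i1 i2 i1' i2' : Interaction A L} {a : A} :
      Prunes theta ({theta a} \ r) i1 i1' → Exec theta i2 a i2' →
      Exec theta (.coreg r i1 i2) a (.coreg r i1' i2')
  | loopS {i1 i1' : Interaction A L} {a : A} :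
      Exec theta i1 a i1' → Exec theta (.loopS i1) a (.strict i1' (.loopS i1))
  | loopC {r : Set L} {i1 i1' i' : Interaction A L} {a : A} :
      Exec theta i1 a i1' → Prunes theta ({theta a} \ r) (.loopC r i1) i' →
      Exec theta (.loopC r i1) a (.coreg r i' (.coreg r i1' (.loopC r i1)))

namespace ExecSoundAux

variable {A L : Type} {theta : A → L} {r : Set L}

lemma condSeq_mem {u v t : List A} (h : CondSeq theta r u v t) :
    ∀ b ∈ t, b ∈ u ∨ b ∈ v := by
  induction h with
  | nil_left t2 => intro b hb; exact Or.inr hb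
  | nil_right t1 => intro b hb; exact Or.inl hb
  | left h ih =>
    intro b hb
    rcases List.mem_cons.mp hb with rfl | hb
    · exact Or.inl (List.mem_cons_self)
    · rcases ih b hb with h' | h'
      · exact Or.inl (List.mem_cons_of_mem _ h')
      · exact Or.inr h'
  | right h hc ih =>
    intro b hb
    rcases List.mem_cons.mp hb with rfl | hb
    · exact Or.inr (List.mem_cons_self)
    · rcases ih b hb with h' | h'
      · exact Or.inl h'
      · exact Or.inr (List.mem_cons_of_mem _ h')

lemma condSeq_nil_left {v t : List A} (h : CondSeq theta r [] v t) : t = v := by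
  cases h <;> rfl

lemma condSeq_nil_right {u t : List A} (h : CondSeq theta r u [] t) : t = u := by
  cases h <;> rfl

lemma condSeq_eq_nil {u v : List A} (h : CondSeq theta r u v []) : u = [] ∧ v = [] := by
  cases h <;> simp_all

lemma condSeq_cons_left {u v t : List A} (a : A) (h : CondSeq theta r u v t) :
    CondSeq theta r (a :: u) v (a :: t) := by
  cases v with
  | nil => obtain rfl := condSeq_nil_right h; exact .nil_right _
  | cons b v' => exact .left h

lemma condConflict_iff {t : List A} {l : L} :
    condConflict theta r t l ↔ ∃ b ∈ t, theta b = l ∧ l ∉ r := by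
  induction t with
  | nil => simp [condConflict]
  | cons a t ih =>
    simp only [condConflict, ih, List.mem_cons]
    constructor
    · rintro (⟨h1, h2⟩ | ⟨b, hb, h1, h2⟩)
      · exact ⟨a, Or.inl rfl, h1, h2⟩
      · exact ⟨b, Or.inr hb, h1, h2⟩
    · rintro ⟨b, (rfl | hb), h1, h2⟩
      · exact Or.inl ⟨h1, h2⟩
      · exact Or.inr ⟨b, hb, h1, h2⟩

lemma not_condConflict_of_subset {x s : List A} {l : L}
    (hsub : ∀ b ∈ x, b ∈ s) (h : ¬ condConflict theta r s l) :
    ¬ condConflict theta r x l := by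
  intro hc
  obtain ⟨b, hb, h1, h2⟩ := condConflict_iff.mp hc
  exact h (condConflict_iff.mpr ⟨b, hsub b hb, h1, h2⟩)

lemma condSeq_mem_rev {u v t : List A} (h : CondSeq theta r u v t) :
    ∀ b, (b ∈ u ∨ b ∈ v) → b ∈ t := by
  induction h with
  | nil_left t2 =>
    intro b hb
    rcases hb with h | h
    · simp at h
    · exact h
  | nil_right t1 =>
    intro b hb
    rcases hb with h | h
    · exact h
    · simp at h
  | left h ih =>
    intro b hb
    rcases hb with h' | h'
    · rcases List.mem_cons.mp h' with rfl | h''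
      · exact List.mem_cons_self
      · exact List.mem_cons_of_mem _ (ih b (Or.inl h''))
    · exact List.mem_cons_of_mem _ (ih b (Or.inr h'))
  | right h hc ih =>
    intro b hb
    rcases hb with h' | h'
    · exact List.mem_cons_of_mem _ (ih b (Or.inl h'))
    · rcases List.mem_cons.mp h' with rfl | h''
      · exact List.mem_cons_self
      · exact List.mem_cons_of_mem _ (ih b (Or.inr h''))

lemma condSeq_insert_right {u v t : List A} {a : A}
    (h : CondSeq theta r u v t) (hnc : ¬ condConflict theta r u (theta a)) :
    CondSeq theta r u (a :: v) (a :: t) := by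
  cases u with
  | nil => obtain rfl := condSeq_nil_left h; exact .nil_left _
  | cons c u' => exact .right h hnc

lemma condSeq_assoc {t1 t2 s t3 t : List A}
    (h1 : CondSeq theta r t1 t2 s) (h2 : CondSeq theta r s t3 t) :
    ∃ v, CondSeq theta r t2 t3 v ∧ CondSeq theta r t1 v t := by
  induction h2 generalizing t1 t2 with
  | nil_left t3 =>
    obtain ⟨rfl, rfl⟩ := condSeq_eq_nil h1
    exact ⟨t3, .nil_left _, .nil_left _⟩
  | nil_right s => exact ⟨t2, .nil_right _, h1⟩
  | @left a1 a3 s' t3' t' h2' ih =>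
    cases h1 with
    | nil_left => exact ⟨a1 :: t', .left h2', .nil_left _⟩
    | nil_right => exact ⟨a3 :: t3', .nil_left _, .left h2'⟩
    | @left _ b t1'' t2'' _ h1' =>
      obtain ⟨v, hv1, hv2⟩ := ih h1'
      exact ⟨v, hv1, condSeq_cons_left a1 hv2⟩
    | @right c _ t1'' t2'' _ h1' hnc =>
      obtain ⟨v, hv1, hv2⟩ := ih h1'
      exact ⟨a1 :: v, condSeq_cons_left a1 hv1, .right hv2 hnc⟩
  | @right c a3 s' t3' t' h2' hc ih =>
    obtain ⟨v, hv1, hv2⟩ := ih h1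
    have h2c : ¬ condConflict theta r t2 (theta a3) :=
      not_condConflict_of_subset (fun b hb => condSeq_mem_rev h1 b (Or.inr hb)) hc
    have h1c : ¬ condConflict theta r t1 (theta a3) :=
      not_condConflict_of_subset (fun b hb => condSeq_mem_rev h1 b (Or.inl hb)) hc
    exact ⟨a3 :: v, condSeq_insert_right hv1 h2c, condSeq_insert_right hv2 h1c⟩

lemma powOp_condSeq_closed {S : Set (List A)} :
    ∀ n m (u x y : List A), u ∈ powOp (condSeqSet theta r) S n →
      x ∈ powOp (condSeqSet theta r) S m → CondSeq theta r u x y →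
      y ∈ powOp (condSeqSet theta r) S (n + m) := by
  intro n
  induction n with
  | zero =>
    intro m u x y hu hx h
    simp only [powOp, Set.mem_singleton_iff] at hu
    subst hu
    obtain rfl := condSeq_nil_left h
    simpa using hx
  | succ n ih =>
    intro m u x y hu hx h
    obtain ⟨u1, hu1, u2, hu2, h12⟩ := hu
    obtain ⟨v, hv1, hv2⟩ := condSeq_assoc h12 h
    have hmem := ih m u2 x v hu2 hx hv1
    have heq : n + 1 + m = (n + m) + 1 := by omega
    rw [heq]
    exact ⟨u1, hu1, v, hmem, hv2⟩

lemma powOp_mono {op : Set (List A) → Set (List A) → Set (List A)}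
    (hop : ∀ S1 S2 T1 T2 : Set (List A), S1 ⊆ T1 → S2 ⊆ T2 → op S1 S2 ⊆ op T1 T2)
    {S T : Set (List A)} (h : S ⊆ T) : ∀ n, powOp op S n ⊆ powOp op T n := by
  intro n
  induction n with
  | zero => exact subset_rfl
  | succ n ih => exact hop _ _ _ _ h ih

lemma concatSet_mono : ∀ S1 S2 T1 T2 : Set (List A), S1 ⊆ T1 → S2 ⊆ T2 →
    concatSet S1 S2 ⊆ concatSet T1 T2 := by
  rintro S1 S2 T1 T2 h1 h2 t ⟨u, hu, v, hv, rfl⟩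
  exact ⟨u, h1 hu, v, h2 hv, rfl⟩

lemma condSeqSet_mono : ∀ S1 S2 T1 T2 : Set (List A), S1 ⊆ T1 → S2 ⊆ T2 →
    condSeqSet theta r S1 S2 ⊆ condSeqSet theta r T1 T2 := by
  rintro S1 S2 T1 T2 h1 h2 t ⟨u, hu, v, hv, hc⟩
  exact ⟨u, h1 hu, v, h2 hv, hc⟩

lemma kleene_mono {op : Set (List A) → Set (List A) → Set (List A)}
    (hop : ∀ S1 S2 T1 T2 : Set (List A), S1 ⊆ T1 → S2 ⊆ T2 → op S1 S2 ⊆ op T1 T2)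
    {S T : Set (List A)} (h : S ⊆ T) : kleene op S ⊆ kleene op T := by
  intro t ht
  obtain ⟨n, hn⟩ := Set.mem_iUnion.mp ht
  exact Set.mem_iUnion.mpr ⟨n, powOp_mono hop h n hn⟩

lemma nil_mem_kleene {op : Set (List A) → Set (List A) → Set (List A)}
    {S : Set (List A)} : ([] : List A) ∈ kleene op S :=
  Set.mem_iUnion.mpr ⟨0, rfl⟩

lemma prunes_subset {L' : Set L} {i i' : Interaction A L}
    (h : Prunes theta L' i i') : rho theta i' ⊆ rho theta i := by
  induction h with
  | empty => exact subset_rfl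
  | act _ => exact subset_rfl
  | alt_both h1 h2 ih1 ih2 => exact Set.union_subset_union ih1 ih2
  | alt_left h1 hcp ih => exact ih.trans Set.subset_union_left
  | alt_right h2 hcp ih => exact ih.trans Set.subset_union_right
  | strict h1 h2 ih1 ih2 => exact concatSet_mono _ _ _ _ ih1 ih2
  | coreg h1 h2 ih1 ih2 => exact condSeqSet_mono _ _ _ _ ih1 ih2
  | loopS h1 ih => exact kleene_mono concatSet_mono ih
  | loopS_elim hcp =>
    intro t ht
    simp only [rho, Set.mem_singleton_iff] at ht
    subst ht
    exact nil_mem_kleene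
  | loopC h1 ih => exact kleene_mono condSeqSet_mono ih
  | loopC_elim hcp =>
    intro t ht
    simp only [rho, Set.mem_singleton_iff] at ht
    subst ht
    exact nil_mem_kleene

def Avoid (theta : A → L) (L' : Set L) (S : Set (List A)) : Prop :=
  ∀ t ∈ S, ∀ b ∈ t, theta b ∉ L'

lemma avoid_concat {L' : Set L} {X Y : Set (List A)}
    (hX : Avoid theta L' X) (hY : Avoid theta L' Y) :
    Avoid theta L' (concatSet X Y) := by
  rintro t ⟨u, hu, v, hv, rfl⟩ b hb
  rcases List.mem_append.mp hb with h | h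
  · exact hX u hu b h
  · exact hY v hv b h

lemma avoid_condSeq {L' : Set L} {X Y : Set (List A)}
    (hX : Avoid theta L' X) (hY : Avoid theta L' Y) :
    Avoid theta L' (condSeqSet theta r X Y) := by
  rintro t ⟨u, hu, v, hv, hc⟩ b hb
  rcases condSeq_mem hc b hb with h | h
  · exact hX u hu b h
  · exact hY v hv b h

lemma avoid_kleene {L' : Set L} {op : Set (List A) → Set (List A) → Set (List A)}
    (hop : ∀ X Y : Set (List A), Avoid theta L' X → Avoid theta L' Y →
      Avoid theta L' (op X Y))
    {S : Set (List A)} (hS : Avoid theta L' S) : Avoid theta L' (kleene op S) := by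
  have hpow : ∀ n, Avoid theta L' (powOp op S n) := by
    intro n
    induction n with
    | zero =>
      rintro t ht b hb
      simp only [powOp, Set.mem_singleton_iff] at ht
      subst ht
      simp at hb
    | succ n ih => exact hop _ _ hS ih
  intro t ht
  obtain ⟨n, hn⟩ := Set.mem_iUnion.mp ht
  exact hpow n t hn

lemma prunes_avoid {L' : Set L} {i i' : Interaction A L}
    (h : Prunes theta L' i i') : Avoid theta L' (rho theta i') := by
  induction h with
  | empty =>
    rintro t ht b hb
    simp only [rho, Set.mem_singleton_iff] at ht
    subst ht; simp at hb
  | @act a ha =>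
    rintro t ht b hb
    simp only [rho, Set.mem_singleton_iff] at ht
    subst ht
    simp only [List.mem_singleton] at hb
    subst hb; exact ha
  | alt_both h1 h2 ih1 ih2 =>
    rintro t (ht | ht)
    · exact ih1 t ht
    · exact ih2 t ht
  | alt_left h1 hcp ih => exact ih
  | alt_right h2 hcp ih => exact ih
  | strict h1 h2 ih1 ih2 => exact avoid_concat ih1 ih2
  | coreg h1 h2 ih1 ih2 => exact avoid_condSeq ih1 ih2
  | loopS h1 ih => exact avoid_kleene (fun X Y => avoid_concat) ih
  | loopS_elim hcp =>
    rintro t ht b hb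
    simp only [rho, Set.mem_singleton_iff] at ht
    subst ht; simp at hb
  | loopC h1 ih => exact avoid_kleene (fun X Y => avoid_condSeq) ih
  | loopC_elim hcp =>
    rintro t ht b hb
    simp only [rho, Set.mem_singleton_iff] at ht
    subst ht; simp at hb

lemma avoid_not_condConflict {u : List A} {a : A}
    (h : ∀ b ∈ u, theta b ∉ ({theta a} \ r : Set L)) :
    ¬ condConflict theta r u (theta a) := by
  intro hc
  obtain ⟨b, hb, h1, h2⟩ := condConflict_iff.mp hc
  exact h b hb ⟨h1, by rw [h1]; exact h2⟩
end ExecSoundAux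

open ExecSoundAux

/-- Soundness of the execution relation w.r.t. the denotational semantics. -/
theorem exec_sound {A L : Type} (theta : A → L)
    (i i' : Interaction A L) (a : A) (t : List A)
    (hexec : Exec theta i a i') (ht : t ∈ rho theta i') :
    a :: t ∈ rho theta i := by
  induction hexec generalizing t with
  | act a0 =>
    simp only [rho, Set.mem_singleton_iff] at ht ⊢
    subst ht; rfl
  | @alt_left i1 i2 i1' a h ih => exact Or.inl (ih t ht)
  | @alt_right i1 i2 i2' a h ih => exact Or.inr (ih t ht)
  | @strict_left i1 i2 i1' a h ih =>
    obtain ⟨u, hu, v, hv, rfl⟩ := ht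
    exact ⟨a :: u, ih u hu, v, hv, rfl⟩
  | @strict_right i1 i2 i2' a hp h ih =>
    have hnil : ([] : List A) ∈ rho theta _ := prunes_subset hp rfl
    exact ⟨[], hnil, a :: t, ih t ht, rfl⟩
  | @coreg_left r i1 i2 i1' a h ih =>
    obtain ⟨u, hu, v, hv, hc⟩ := ht
    exact ⟨a :: u, ih u hu, v, hv, condSeq_cons_left a hc⟩
  | @coreg_right r i1 i2 i1' i2' a hp h ih =>
    obtain ⟨u, hu, v, hv, hc⟩ := ht
    have hav := prunes_avoid hp u hu
    exact ⟨u, prunes_subset hp hu, a :: v, ih v hv,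
      condSeq_insert_right hc (avoid_not_condConflict hav)⟩
  | @loopS i1 i1' a h ih =>
    obtain ⟨u, hu, v, hv, rfl⟩ := ht
    obtain ⟨n, hn⟩ := Set.mem_iUnion.mp hv
    exact Set.mem_iUnion.mpr ⟨n + 1, a :: u, ih u hu, v, hn, rfl⟩
  | @loopC r i1 i1' i'' a h hp ih =>
    obtain ⟨u, hu, vv, hvv, hc⟩ := ht
    obtain ⟨w, hw, z, hz, hcz⟩ := hvv
    obtain ⟨m, hm⟩ := Set.mem_iUnion.mp hz
    have haw : a :: w ∈ rho theta i1 := ih w hw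
    have hav : a :: vv ∈ powOp (condSeqSet theta r) (rho theta i1) (m + 1) :=
      ⟨a :: w, haw, z, hm, condSeq_cons_left a hcz⟩
    have hu' : u ∈ rho theta (.loopC r i1) := prunes_subset hp hu
    obtain ⟨n, hn⟩ := Set.mem_iUnion.mp hu'
    have hins : CondSeq theta r u (a :: vv) (a :: t) :=
      condSeq_insert_right hc (avoid_not_condConflict (prunes_avoid hp u hu))
    exact Set.mem_iUnion.mpr ⟨n + (m + 1),
      powOp_condSeq_closed n (m + 1) u (a :: vv) (a :: t) hn hav hins⟩
end

section
/- The number of actions outside loops strictly decreases under execution of an action at loop depth 0: if i —a@p→ i' with β(i,p) = 0 (the executed action occurrence is not under any loop operator), then η(i') ≤ η(i) − 1, where η counts actions outside loops. -/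
/-- Execution relation with positions: `ExecP theta i a p i'` means `i —a@p→ i'`,
where a position is a word over `{1, 2}` encoded as `List Bool`
(`false` for direction 1, `true` for direction 2). -/
inductive ExecP {A L : Type} (theta : A → L) :
    Interaction A L → A → List Bool → Interaction A L → Prop
  | act (a : A) : ExecP theta (.act a) a [] .empty
  | alt_left {i1 i2 i1' : Interaction A L} {a : A} {p : List Bool} :
      ExecP theta i1 a p i1' → ExecP theta (.alt i1 i2) a (false :: p) i1'
  | alt_right {i1 i2 i2' : Interaction A L} {a : A} {p : List Bool} :
      ExecP theta i2 a p i2' → ExecP theta (.alt i1 i2) a (true :: p) i2'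
  | strict_left {i1 i2 i1' : Interaction A L} {a : A} {p : List Bool} :
      ExecP theta i1 a p i1' →
      ExecP theta (.strict i1 i2) a (false :: p) (.strict i1' i2)
  | strict_right {i1 i2 i2' : Interaction A L} {a : A} {p : List Bool} :
      Prunes theta Set.univ i1 .empty → ExecP theta i2 a p i2' →
      ExecP theta (.strict i1 i2) a (true :: p) i2'
  | coreg_left {r : Set L} {i1 i2 i1' : Interaction A L} {a : A} {p : List Bool} :
      ExecP theta i1 a p i1' →
      ExecP theta (.coreg r i1 i2) a (false :: p) (.coreg r i1' i2)
  | coreg_right {r : Set L} {i1 i2 i1' i2' : Interaction A L} {a : A} {p : List Bool} :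
      Prunes theta ({theta a} \ r) i1 i1' → ExecP theta i2 a p i2' →
      ExecP theta (.coreg r i1 i2) a (true :: p) (.coreg r i1' i2')
  | loopS {i1 i1' : Interaction A L} {a : A} {p : List Bool} :
      ExecP theta i1 a p i1' →
      ExecP theta (.loopS i1) a (false :: p) (.strict i1' (.loopS i1))
  | loopC {r : Set L} {i1 i1' i' : Interaction A L} {a : A} {p : List Bool} :
      ExecP theta i1 a p i1' → Prunes theta ({theta a} \ r) (.loopC r i1) i' →
      ExecP theta (.loopC r i1) a (false :: p)
        (.coreg r i' (.coreg r i1' (.loopC r i1)))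

/-- Loop depth `β(i, p)`: number of loop operators strictly above position `p`. -/
def loopDepth {A L : Type} : Interaction A L → List Bool → ℕ
  | _, [] => 0
  | .alt i1 _, false :: p => loopDepth i1 p
  | .alt _ i2, true :: p => loopDepth i2 p
  | .strict i1 _, false :: p => loopDepth i1 p
  | .strict _ i2, true :: p => loopDepth i2 p
  | .coreg _ i1 _, false :: p => loopDepth i1 p
  | .coreg _ _ i2, true :: p => loopDepth i2 p
  | .loopS i1, _ :: p => loopDepth i1 p + 1
  | .loopC _ i1, _ :: p => loopDepth i1 p + 1
  | .empty, _ :: _ => 0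
  | .act _, _ :: _ => 0

/-- `η(i)`: number of actions occurring outside loops. -/
def eta {A L : Type} : Interaction A L → ℕ
  | .empty => 0
  | .act _ => 1
  | .alt i1 i2 => max (eta i1) (eta i2)
  | .strict i1 i2 => eta i1 + eta i2
  | .coreg _ i1 i2 => eta i1 + eta i2
  | .loopS _ => 0
  | .loopC _ _ => 0

theorem eta_le_of_prunes {A L : Type} {theta : A → L} {L' : Set L}
    {i i' : Interaction A L} (h : Prunes theta L' i i') : eta i' ≤ eta i := by
  induction h with
  | alt_both _ _ ih1 ih2 => exact max_le_max ih1 ih2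
  | alt_left _ _ ih => exact ih.trans (le_max_left _ _)
  | alt_right _ _ ih => exact ih.trans (le_max_right _ _)
  | strict _ _ ih1 ih2 | coreg _ _ ih1 ih2 => exact add_le_add ih1 ih2
  | _ => exact le_rfl

/-- Executing an action at loop depth 0 strictly decreases the number of actions
outside loops : `η(i') ≤ η(i) − 1`. -/
theorem eta_decreases_outside_loops {A L : Type} (theta : A → L)
    (i i' : Interaction A L) (a : A) (p : List Bool)
    (hexec : ExecP theta i a p i') (hdepth : loopDepth i p = 0) :
    eta i' + 1 ≤ eta i := by
  induction hexec with
  | act => exact le_rfl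
  | alt_left _ ih => exact (ih hdepth).trans (le_max_left _ _)
  | alt_right _ ih => exact (ih hdepth).trans (le_max_right _ _)
  | strict_right _ _ ih => exact (ih hdepth).trans (Nat.le_add_left _ _)
  | strict_left _ ih | coreg_left _ ih =>
    have hleft := ih hdepth
    show eta _ + eta _ + 1 ≤ eta _ + eta _
    omega
  | coreg_right hprune _ ih =>
    have hleft := eta_le_of_prunes hprune
    have hright := ih hdepth
    show eta _ + eta _ + 1 ≤ eta _ + eta _
    omega
  | loopS | loopC => simp [loopDepth] at hdepth
end
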